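/- arXiv:2111.15538 — 2 statements merged into one kernel-verified Lean document; each statement's English description precedes it below -/
import Mathlib

section
/- The Jacobi triple product identity: for 0 < u < 1 and z ≠ 0, Σ_{c ∈ ℤ} z^c u^{c²/2} = (u;u)_∞ · (-√u z; u)_∞ · (-√u / z; u)_∞, where (x;u)_∞ = Π_{i≥0}(1 - x u^i). -/
/-!
Gauss's `Q`-binomial theorem `∏_{k<N} (1 + x Q^k) = ∑_j Q^(j choose 2) [N, j]_Q x^j`, taken with
`Q = q²`, `N = 2n` and `x = q z / Q^n`, gives Cauchy's finite triple product
`∏_{m<n} (1 + q z Q^m)(1 + (q/z) Q^m) = ∑_{|c| ≤ n} [2n, n + c]_Q z^c q^(c²)`: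
the upper `n` factors are the `z`-product, the lower `n` factors, read backwards, are the
`1/z`-product times `z^n / q^(n²)`, and completing the square `j² - 2nj = (j - n)² - n²` pulls
the same factor out of every summand. For `0 < Q < 1` the coefficient
`[2n, n + c]_Q = (Q;Q)_{2n} / ((Q;Q)_{n-c} (Q;Q)_{n+c})` tends to `1 / (Q;Q)_∞` and is bounded
by `1 / (Q;Q)_∞²`, so dominated convergence over `c ∈ ℤ` lets `n → ∞`.
-/

open Finset Filter Topology

lemma choose_two_succ (j : ℕ) : (j + 1).choose 2 = j.choose 2 + j := by
  rw [Nat.choose_succ_succ', Nat.choose_one_right, add_comm]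

lemma two_mul_choose_two_add_self (j : ℕ) : 2 * j.choose 2 + j = j ^ 2 := by
  induction j with
  | zero => rfl
  | succ j ih => rw [choose_two_succ]; nlinarith

section GaussBinom

variable {R : Type*} [CommRing R] (Q : R)

def gaussBinom : ℕ → ℕ → R
  | _, 0 => 1
  | 0, _ + 1 => 0
  | n + 1, k + 1 => gaussBinom n k + Q ^ (k + 1) * gaussBinom n (k + 1)

/-- `qPoch Q n = (Q; Q)_n`. -/
def qPoch (n : ℕ) : R := ∏ i ∈ range n, (1 - Q ^ (i + 1))

@[simp]
lemma gaussBinom_zero_right (n : ℕ) : gaussBinom Q n 0 = 1 := by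
  cases n <;> rfl

lemma gaussBinom_succ_succ (n k : ℕ) :
    gaussBinom Q (n + 1) (k + 1) = gaussBinom Q n k + Q ^ (k + 1) * gaussBinom Q n (k + 1) :=
  rfl

lemma gaussBinom_eq_zero_of_lt {n k : ℕ} (h : n < k) : gaussBinom Q n k = 0 := by
  induction n generalizing k with
  | zero => obtain ⟨k, rfl⟩ := Nat.exists_eq_succ_of_ne_zero h.ne'; rfl
  | succ n ih =>
    obtain ⟨k, rfl⟩ := Nat.exists_eq_succ_of_ne_zero (by omega : k ≠ 0)
    rw [gaussBinom_succ_succ, ih (by omega), ih (by omega), mul_zero, add_zero]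

@[simp]
lemma gaussBinom_self (n : ℕ) : gaussBinom Q n n = 1 := by
  induction n with
  | zero => rfl
  | succ n ih => rw [gaussBinom_succ_succ, ih, gaussBinom_eq_zero_of_lt Q n.lt_succ_self]; ring

lemma map_gaussBinom {S : Type*} [CommRing S] (f : R →+* S) (n k : ℕ) :
    f (gaussBinom Q n k) = gaussBinom (f Q) n k := by
  induction n generalizing k with
  | zero => cases k <;> simp [gaussBinom]
  | succ n ih => cases k <;> simp [gaussBinom, ih]

theorem prod_one_add_mul_pow_eq_sum_gaussBinom (x : R) (n : ℕ) :
    ∏ k ∈ range n, (1 + x * Q ^ k) =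
      ∑ j ∈ range (n + 1), Q ^ j.choose 2 * gaussBinom Q n j * x ^ j := by
  induction n generalizing x with
  | zero => simp
  | succ n ih =>
    set t : ℕ → R := fun j => Q ^ j.choose 2 * gaussBinom Q n j * (x * Q) ^ j with ht
    have hprod : ∏ k ∈ range n, (1 + x * Q ^ (k + 1)) = ∑ j ∈ range (n + 1), t j := by
      rw [ht, ← ih]
      simp only [pow_succ', mul_assoc, mul_left_comm x]
    have hpascal (j : ℕ) : Q ^ (j + 1).choose 2 * gaussBinom Q (n + 1) (j + 1) * x ^ (j + 1) =
        x * t j + t (j + 1) := by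
      simp only [ht, gaussBinom_succ_succ, choose_two_succ]
      ring
    have hfirst : Q ^ (0 : ℕ).choose 2 * gaussBinom Q (n + 1) 0 * x ^ 0 = t 0 := by simp [ht]
    have hlast : t (n + 1) = 0 := by simp [ht, gaussBinom_eq_zero_of_lt Q n.lt_succ_self]
    rw [prod_range_succ', sum_range_succ', sum_congr rfl fun j _ => hpascal j, sum_add_distrib,
      ← mul_sum, add_assoc, hfirst, ← sum_range_succ', sum_range_succ _ (n + 1), hlast, hprod]
    ring

lemma qPoch_succ (n : ℕ) : qPoch Q (n + 1) = qPoch Q n * (1 - Q ^ (n + 1)) :=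
  prod_range_succ _ _

theorem gaussBinom_add_mul_qPoch_mul_qPoch (m k : ℕ) :
    gaussBinom Q (m + k) k * qPoch Q m * qPoch Q k = qPoch Q (m + k) := by
  induction m generalizing k with
  | zero => simp [qPoch]
  | succ m ihm =>
    induction k with
    | zero => simp [qPoch]
    | succ k ihk =>
      have e1 := ihm (k + 1)
      rw [show m + 1 + k = m + k + 1 by omega, qPoch_succ Q m] at ihk
      rw [show m + (k + 1) = m + k + 1 by omega, qPoch_succ Q k] at e1
      rw [show m + 1 + (k + 1) = m + k + 1 + 1 by omega, gaussBinom_succ_succ,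
        qPoch_succ Q (m + k + 1), qPoch_succ Q m, qPoch_succ Q k]
      linear_combination (1 - Q ^ (k + 1)) * ihk + Q ^ (k + 1) * (1 - Q ^ (m + 1)) * e1

end GaussBinom

section Field

variable {K : Type*} [Field K] {q z : K}

lemma pow_choose_two_mul_pow_eq (hq : q ≠ 0) (hz : z ≠ 0) (n j : ℕ) :
    (q ^ 2) ^ j.choose 2 * (q * z / (q ^ 2) ^ n) ^ j =
      z ^ n / q ^ (n ^ 2) * (z ^ ((j : ℤ) - n) * q ^ (((j : ℤ) - n) ^ 2)) := by
  rw [show ((j : ℤ) - n) ^ 2 = ((j ^ 2 + n ^ 2 : ℕ) : ℤ) - ((2 * n * j : ℕ) : ℤ) by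
      push_cast; ring,
    zpow_sub₀ hq, zpow_sub₀ hz, zpow_natCast, zpow_natCast, zpow_natCast, zpow_natCast]
  have hq2 : q ^ (2 * j.choose 2) * q ^ j = q ^ (j ^ 2) := by
    rw [← pow_add, two_mul_choose_two_add_self]
  simp only [div_pow, mul_pow, ← pow_mul]
  rw [pow_add q (j ^ 2), ← hq2]
  field_simp

lemma prod_one_add_mul_pow_eq_mul_prod_one_add_div (hq : q ≠ 0) (hz : z ≠ 0) (n : ℕ) :
    ∏ k ∈ range n, (1 + q * z / (q ^ 2) ^ n * (q ^ 2) ^ k) =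
      z ^ n / q ^ (n ^ 2) * ∏ m ∈ range n, (1 + q / z * (q ^ 2) ^ m) := by
  have hfactor (m : ℕ) (hm : m < n) : 1 + q * z / (q ^ 2) ^ n * (q ^ 2) ^ (n - 1 - m) =
      z / (q * (q ^ 2) ^ m) * (1 + q / z * (q ^ 2) ^ m) := by
    rw [show (q ^ 2) ^ n = (q ^ 2) ^ (n - 1 - m) * q ^ 2 * (q ^ 2) ^ m by
      rw [← pow_succ, ← pow_add]; congr 1; omega]
    field_simp
    ring
  have hprod : ∏ m ∈ range n, z / (q * (q ^ 2) ^ m) = z ^ n / q ^ (n ^ 2) := by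
    rw [prod_div_distrib, prod_const, card_range, prod_mul_distrib, prod_const, card_range,
      prod_pow_eq_pow_sum, ← pow_mul, ← pow_add, mul_comm 2, sum_range_id_mul_two]
    congr 2
    cases n <;> simp; ring
  rw [← prod_range_reflect, prod_congr rfl fun m hm => hfactor m (mem_range.1 hm),
    prod_mul_distrib, hprod]

theorem prod_one_add_mul_prod_one_add_div_eq_sum (hq : q ≠ 0) (hz : z ≠ 0) (n : ℕ) :
    (∏ m ∈ range n, (1 + q * z * (q ^ 2) ^ m)) * ∏ m ∈ range n, (1 + q / z * (q ^ 2) ^ m) =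
      ∑ j ∈ range (2 * n + 1),
        gaussBinom (q ^ 2) (2 * n) j * (z ^ ((j : ℤ) - n) * q ^ (((j : ℤ) - n) ^ 2)) := by
  have hgauss := prod_one_add_mul_pow_eq_sum_gaussBinom (q ^ 2) (q * z / (q ^ 2) ^ n) (2 * n)
  have hupper (k : ℕ) :
      1 + q * z / (q ^ 2) ^ n * (q ^ 2) ^ (n + k) = 1 + q * z * (q ^ 2) ^ k := by
    rw [pow_add]
    field_simp
  rw [two_mul n, prod_range_add, prod_one_add_mul_pow_eq_mul_prod_one_add_div hq hz,
    prod_congr rfl fun k _ => hupper k, ← two_mul] at hgauss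
  have hterm (j : ℕ) :
      (q ^ 2) ^ j.choose 2 * gaussBinom (q ^ 2) (2 * n) j * (q * z / (q ^ 2) ^ n) ^ j =
        z ^ n / q ^ (n ^ 2) *
          (gaussBinom (q ^ 2) (2 * n) j * (z ^ ((j : ℤ) - n) * q ^ (((j : ℤ) - n) ^ 2))) := by
    rw [mul_right_comm, pow_choose_two_mul_pow_eq hq hz]
    ring
  rw [sum_congr rfl fun j _ => hterm j, ← mul_sum] at hgauss
  exact mul_left_cancel₀ (a := z ^ n / q ^ (n ^ 2)) (by positivity) (by rw [← hgauss]; ring)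

end Field

section Central

variable {R : Type*} [CommRing R] (Q : R)

def centralGaussBinom (n : ℕ) (c : ℤ) : R :=
  if c.natAbs ≤ n then gaussBinom Q (2 * n) (n + c).toNat else 0

lemma map_centralGaussBinom {S : Type*} [CommRing S] (f : R →+* S) (n : ℕ) (c : ℤ) :
    f (centralGaussBinom Q n c) = centralGaussBinom (f Q) n c := by
  unfold centralGaussBinom
  split_ifs <;> simp [map_gaussBinom]

lemma tsum_centralGaussBinom_mul [TopologicalSpace R] (n : ℕ) (w : ℤ → R) :
    ∑' c, centralGaussBinom Q n c * w c =
      ∑ j ∈ range (2 * n + 1), gaussBinom Q (2 * n) j * w (j - n) := by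
  have hinj : Function.Injective fun j : ℕ => (j : ℤ) - n := fun a b h => by simpa using h
  rw [← hinj.tsum_eq, tsum_eq_sum (s := range (2 * n + 1))]
  · refine sum_congr rfl fun j hj => ?_
    have hj : ((j : ℤ) - n).natAbs ≤ n := by rw [mem_range] at hj; omega
    simp only [centralGaussBinom, hj, if_true, add_sub_cancel, Int.toNat_natCast]
  · intro j hj
    have hj : ¬((j : ℤ) - n).natAbs ≤ n := by rw [mem_range] at hj; omega
    simp [centralGaussBinom, hj]
  · intro c hc
    have hc : c.natAbs ≤ n := by
      by_contra h
      exact hc (by simp [centralGaussBinom, h])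
    exact ⟨(n + c).toNat, by simp only; omega⟩

lemma centralGaussBinom_mul_qPoch_mul_qPoch {n : ℕ} {c : ℤ} (hc : c.natAbs ≤ n) :
    centralGaussBinom Q n c * qPoch Q (n - c).toNat * qPoch Q (n + c).toNat = qPoch Q (2 * n) := by
  have h := gaussBinom_add_mul_qPoch_mul_qPoch Q (n - c).toNat (n + c).toNat
  rw [show (n - c).toNat + (n + c).toNat = 2 * n by omega] at h
  rwa [centralGaussBinom, if_pos hc]

end Central

section Real

variable {u : ℝ}

lemma qPoch_pos (hu0 : 0 ≤ u) (hu1 : u < 1) (n : ℕ) : 0 < qPoch u n :=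
  prod_pos fun i _ => sub_pos.2 (pow_lt_one₀ hu0 hu1 i.succ_ne_zero)

lemma antitone_qPoch (hu0 : 0 ≤ u) (hu1 : u < 1) : Antitone (qPoch u) :=
  antitone_nat_of_succ_le fun n => by
    rw [qPoch_succ]
    exact mul_le_of_le_one_right (qPoch_pos hu0 hu1 n).le (by linarith [pow_nonneg hu0 (n + 1)])

lemma qPoch_le_one (hu0 : 0 ≤ u) (hu1 : u < 1) (n : ℕ) : qPoch u n ≤ 1 :=
  antitone_qPoch hu0 hu1 n.zero_le

lemma summable_log_one_sub_pow_succ (hu0 : 0 ≤ u) (hu1 : u < 1) :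
    Summable fun i : ℕ => Real.log (1 - u ^ (i + 1)) := by
  simp_rw [sub_eq_add_neg]
  refine Real.summable_log_one_add_of_summable (Summable.neg ?_)
  simpa [pow_succ] using (summable_geometric_of_lt_one hu0 hu1).mul_right u

lemma tprod_one_sub_pow_succ_pos (hu0 : 0 ≤ u) (hu1 : u < 1) :
    0 < ∏' i : ℕ, (1 - u ^ (i + 1)) := by
  rw [← Real.rexp_tsum_eq_tprod (fun i => sub_pos.2 (pow_lt_one₀ hu0 hu1 i.succ_ne_zero))
    (summable_log_one_sub_pow_succ hu0 hu1)]
  exact Real.exp_pos _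

lemma hasProd_one_sub_pow_succ (hu0 : 0 ≤ u) (hu1 : u < 1) :
    HasProd (fun i : ℕ => 1 - u ^ (i + 1)) (∏' i : ℕ, (1 - u ^ (i + 1))) :=
  (Real.multipliable_of_summable_log (fun i => sub_pos.2 (pow_lt_one₀ hu0 hu1 i.succ_ne_zero))
    (summable_log_one_sub_pow_succ hu0 hu1)).hasProd

lemma tendsto_qPoch (hu0 : 0 ≤ u) (hu1 : u < 1) :
    Tendsto (qPoch u) atTop (𝓝 (∏' i : ℕ, (1 - u ^ (i + 1)))) :=
  (hasProd_one_sub_pow_succ hu0 hu1).tendsto_prod_nat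

lemma tprod_le_qPoch (hu0 : 0 ≤ u) (hu1 : u < 1) (n : ℕ) :
    ∏' i : ℕ, (1 - u ^ (i + 1)) ≤ qPoch u n :=
  (antitone_qPoch hu0 hu1).le_of_tendsto (tendsto_qPoch hu0 hu1) n

lemma centralGaussBinom_eq_div (hu0 : 0 ≤ u) (hu1 : u < 1) {n : ℕ} {c : ℤ}
    (hc : c.natAbs ≤ n) :
    centralGaussBinom u n c =
      qPoch u (2 * n) / (qPoch u (n - c).toNat * qPoch u (n + c).toNat) := by
  rw [eq_div_iff (mul_pos (qPoch_pos hu0 hu1 _) (qPoch_pos hu0 hu1 _)).ne', ← mul_assoc,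
    centralGaussBinom_mul_qPoch_mul_qPoch u hc]

lemma centralGaussBinom_nonneg (hu0 : 0 ≤ u) (hu1 : u < 1) (n : ℕ) (c : ℤ) :
    0 ≤ centralGaussBinom u n c := by
  by_cases hc : c.natAbs ≤ n
  · rw [centralGaussBinom_eq_div hu0 hu1 hc]
    exact div_nonneg (qPoch_pos hu0 hu1 _).le
      (mul_pos (qPoch_pos hu0 hu1 _) (qPoch_pos hu0 hu1 _)).le
  · simp [centralGaussBinom, hc]

lemma centralGaussBinom_le (hu0 : 0 ≤ u) (hu1 : u < 1) (n : ℕ) (c : ℤ) :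
    centralGaussBinom u n c ≤ ((∏' i : ℕ, (1 - u ^ (i + 1)))⁻¹) ^ 2 := by
  have hD := tprod_one_sub_pow_succ_pos hu0 hu1
  by_cases hc : c.natAbs ≤ n
  · rw [centralGaussBinom_eq_div hu0 hu1 hc, inv_pow, ← one_div, sq]
    exact div_le_div₀ zero_le_one (qPoch_le_one hu0 hu1 _) (by positivity)
      (mul_le_mul (tprod_le_qPoch hu0 hu1 _) (tprod_le_qPoch hu0 hu1 _) hD.le
        (qPoch_pos hu0 hu1 _).le)
  · simp only [centralGaussBinom, hc, if_false]
    positivity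

lemma tendsto_toNat_natCast_add (c : ℤ) :
    Tendsto (fun n : ℕ => ((n : ℤ) + c).toNat) atTop atTop :=
  tendsto_atTop_atTop.2 fun b => ⟨b + c.natAbs, fun n hn => by omega⟩

lemma tendsto_centralGaussBinom (hu0 : 0 ≤ u) (hu1 : u < 1) (c : ℤ) :
    Tendsto (fun n => centralGaussBinom u n c) atTop (𝓝 (∏' i : ℕ, (1 - u ^ (i + 1)))⁻¹) := by
  set D := ∏' i : ℕ, (1 - u ^ (i + 1))
  have hD := tprod_one_sub_pow_succ_pos hu0 hu1
  have hlim : Tendsto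
      (fun n : ℕ => qPoch u (2 * n) / (qPoch u (n - c).toNat * qPoch u (n + c).toNat))
      atTop (𝓝 (D / (D * D))) := by
    have h := tendsto_qPoch hu0 hu1
    refine (h.comp (tendsto_id.const_mul_atTop' two_pos)).div
      ((h.comp ?_).mul (h.comp (tendsto_toNat_natCast_add c))) (by positivity)
    simpa [sub_eq_add_neg] using tendsto_toNat_natCast_add (-c)
  rw [show D / (D * D) = D⁻¹ by field_simp] at hlim
  refine hlim.congr' (eventually_atTop.2 ⟨c.natAbs, fun n hn => ?_⟩)
  exact (centralGaussBinom_eq_div hu0 hu1 hn).symm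

end Real

lemma summable_pow_mul_pow_sq (r : ℝ) {t : ℝ} (ht0 : 0 ≤ t) (ht1 : t < 1) :
    Summable fun n : ℕ => r ^ n * t ^ (n ^ 2) := by
  have hsmall : ∀ᶠ n in atTop, |r| * t ^ n ≤ 1 / 2 := by
    refine Tendsto.eventually_le_const (by norm_num : (0 : ℝ) < 1 / 2) ?_
    simpa using (tendsto_pow_atTop_nhds_zero_of_lt_one ht0 ht1).const_mul |r|
  refine summable_geometric_two.of_norm_bounded_eventually_nat ?_
  filter_upwards [hsmall] with n hn
  calc ‖r ^ n * t ^ (n ^ 2)‖ = (|r| * t ^ n) ^ n := by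
        rw [norm_mul, norm_pow, norm_pow, Real.norm_eq_abs, Real.norm_eq_abs, abs_of_nonneg ht0,
          mul_pow, ← pow_mul, sq]
    _ ≤ (1 / 2) ^ n := pow_le_pow_left₀ (by positivity) hn n

lemma summable_zpow_mul_zpow_sq (r : ℝ) {t : ℝ} (ht0 : 0 ≤ t) (ht1 : t < 1) :
    Summable fun c : ℤ => r ^ c * t ^ (c ^ 2) := by
  apply Summable.of_nat_of_neg
  · simpa [← zpow_natCast] using summable_pow_mul_pow_sq r ht0 ht1
  · simpa [← zpow_natCast] using summable_pow_mul_pow_sq r⁻¹ ht0 ht1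

lemma tendsto_tsum_mul_of_tendsto_of_norm_le {α β 𝕜 : Type*} [NormedRing 𝕜] [CompleteSpace 𝕜]
    {l : Filter α} {a : α → β → 𝕜} {A : 𝕜} {C : ℝ} {w : β → 𝕜} (hw : Summable (‖w ·‖))
    (ha : ∀ c, Tendsto (a · c) l (𝓝 A)) (hC : ∀ n c, ‖a n c‖ ≤ C) :
    Tendsto (fun n => ∑' c, a n c * w c) l (𝓝 (A * ∑' c, w c)) := by
  rw [← hw.of_norm.tsum_mul_left]
  exact tendsto_tsum_of_dominated_convergence (hw.mul_left C) (fun c => (ha c).mul_const (w c))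
    (.of_forall fun n c => (norm_mul_le _ _).trans
      (mul_le_mul_of_nonneg_right (hC n c) (norm_nonneg _)))

lemma ofReal_tprod_one_sub_pow_succ {u : ℝ} (hu0 : 0 ≤ u) (hu1 : u < 1) :
    ((∏' i : ℕ, (1 - u ^ (i + 1)) : ℝ) : ℂ) = ∏' i : ℕ, (1 - (u : ℂ) ^ (i + 1)) := by
  simpa using ((hasProd_one_sub_pow_succ hu0 hu1).map Complex.ofRealHom
    Complex.continuous_ofReal).tprod_eq.symm

lemma tsum_centralGaussBinom_mul_eq_prod {q : ℝ} (hq : q ≠ 0) {z : ℂ} (hz : z ≠ 0) (n : ℕ) :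
    ∑' c : ℤ, ((centralGaussBinom (q ^ 2) n c : ℝ) : ℂ) * (z ^ c * (q : ℂ) ^ (c ^ 2)) =
      (∏ m ∈ range n, (1 + q * z * ((q : ℂ) ^ 2) ^ m)) *
        ∏ m ∈ range n, (1 + q / z * ((q : ℂ) ^ 2) ^ m) := by
  have hcast (c : ℤ) : ((centralGaussBinom (q ^ 2) n c : ℝ) : ℂ) =
      centralGaussBinom ((q : ℂ) ^ 2) n c := by
    rw [← Complex.ofRealHom_eq_coe, map_centralGaussBinom, map_pow, Complex.ofRealHom_eq_coe]
  simp only [hcast]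
  rw [tsum_centralGaussBinom_mul,
    prod_one_add_mul_prod_one_add_div_eq_sum (by exact_mod_cast hq) hz]

theorem tsum_zpow_mul_zpow_sq_eq_tprod {q : ℝ} (hq0 : 0 < q) (hq1 : q < 1) {z : ℂ} (hz : z ≠ 0) :
    ∑' c : ℤ, z ^ c * (q : ℂ) ^ (c ^ 2) =
      (∏' i : ℕ, (1 - ((q : ℂ) ^ 2) ^ (i + 1))) *
        (∏' i : ℕ, (1 + q * z * ((q : ℂ) ^ 2) ^ i)) *
        ∏' i : ℕ, (1 + q / z * ((q : ℂ) ^ 2) ^ i) := by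
  have hu0 : 0 ≤ q ^ 2 := by positivity
  have hu1 : q ^ 2 < 1 := by nlinarith
  have hD := tprod_one_sub_pow_succ_pos hu0 hu1
  have hw : Summable fun c : ℤ => ‖z ^ c * (q : ℂ) ^ (c ^ 2)‖ := by
    simpa [norm_zpow, abs_of_pos hq0] using summable_zpow_mul_zpow_sq ‖z‖ hq0.le hq1
  have hmult (a : ℂ) : Multipliable fun i : ℕ => 1 + a * ((q : ℂ) ^ 2) ^ i := by
    have hQ : ‖(q : ℂ) ^ 2‖ < 1 := by simpa [abs_of_pos hq0] using hu1
    exact Complex.multipliable_one_add_of_summable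
      ((summable_geometric_of_norm_lt_one hQ).mul_left a)
  have hlim := tendsto_tsum_mul_of_tendsto_of_norm_le hw
    (fun c => (Complex.continuous_ofReal.tendsto _).comp (tendsto_centralGaussBinom hu0 hu1 c))
    (fun n c => by
      rw [Function.comp_apply, Complex.norm_real,
        Real.norm_of_nonneg (centralGaussBinom_nonneg hu0 hu1 n c)]
      exact centralGaussBinom_le hu0 hu1 n c)
  have hlim' := ((hmult _).hasProd.tendsto_prod_nat.mul (hmult _).hasProd.tendsto_prod_nat).congr
    fun n => (tsum_centralGaussBinom_mul_eq_prod hq0.ne' hz n).symm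
  have hDC := ofReal_tprod_one_sub_pow_succ hu0 hu1
  push_cast at hDC
  rw [← hDC, mul_assoc, ← tendsto_nhds_unique hlim hlim', ← mul_assoc, ← Complex.ofReal_mul,
    mul_inv_cancel₀ hD.ne', Complex.ofReal_one, one_mul]

/-- The Jacobi triple product identity: for `0 < u < 1` and `z ≠ 0`,
`Σ_{c ∈ ℤ} z^c u^{c²/2} = (u;u)_∞ (-√u z; u)_∞ (-√u/z; u)_∞`,
where `u^{c²/2} = (√u)^{c²}` and `(x;u)_∞ = Π_{i≥0}(1 - x uⁱ)`. -/
theorem stmt7 (u : ℝ) (hu0 : 0 < u) (hu1 : u < 1) (z : ℂ) (hz : z ≠ 0) :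
    ∑' c : ℤ, z ^ c * ((Real.sqrt u : ℂ)) ^ (c ^ 2) =
      (∏' i : ℕ, (1 - (u : ℂ) ^ (i + 1))) *
        (∏' i : ℕ, (1 + (Real.sqrt u : ℂ) * z * (u : ℂ) ^ i)) *
        (∏' i : ℕ, (1 + (Real.sqrt u : ℂ) / z * (u : ℂ) ^ i)) := by
  obtain ⟨q, hq0, rfl⟩ : ∃ q, 0 < q ∧ u = q ^ 2 :=
    ⟨√u, Real.sqrt_pos.2 hu0, (Real.sq_sqrt hu0.le).symm⟩
  rw [Real.sqrt_sq hq0.le]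
  push_cast
  exact tsum_zpow_mul_zpow_sq_eq_tprod hq0 (by nlinarith) hz
end

section
/- The Taylor expansion of the action: with S as above (0 < b < 1, c₁ = -2log(1-b)), S(e^{w}) = S(1) + (b/(3(1-b)²)) w³ + O(w⁴) as w → 0. -/
/-! Using `S(1) = 0`, `log (1 - b) = -∑ bᵏ/k` and `b/(1-b)² = ∑ k bᵏ`, for small `w` the
remainder `S(eʷ) - S(1) - b w³/(3(1-b)²)` is the series
`∑_{k ≥ 1} (bᵏ/k²) (2 sinh(kw) - 2kw - (kw)³/3)`. The Taylor remainder of `exp` bounds each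
bracket by `(kw)⁴ e^{k|w|}/12`; once `|b| e^{|w|} ≤ ρ < 1` the series is at most
`w⁴ ∑ k² ρᵏ/12`. -/

open Asymptotics Filter

/-- The dilogarithm `Li₂(x) = Σ_{k≥1} x^k / k²`. -/
noncomputable def Li2 (x : ℝ) : ℝ := ∑' k : ℕ, x ^ (k + 1) / ((k + 1 : ℝ) ^ 2)

/-- The action `S(z) = Li₂(bz) - Li₂(b/z) + 2 log(1-b) log z`. -/
noncomputable def action (b z : ℝ) : ℝ :=
  Li2 (b * z) - Li2 (b / z) + 2 * Real.log (1 - b) * Real.log z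

open Real Finset
open scoped Nat

theorem Real.abs_exp_sub_sum_range_le (n : ℕ) (x : ℝ) :
    |exp x - ∑ i ∈ range n, x ^ i / i !| ≤ |x| ^ n / n ! * exp |x| := by
  have hexp (y : ℝ) : HasSum (fun n => y ^ n / n !) (exp y) := by
    rw [exp_eq_exp_ℝ]
    exact NormedSpace.expSeries_div_hasSum_exp y
  have htail := (hasSum_nat_add_iff' n).2 (hexp x)
  refine htail.norm_le_of_bounded ((hexp |x|).mul_left _) fun m => ?_
  have hfac : (m ! * n ! : ℝ) ≤ (m + n)! := by
    exact_mod_cast Nat.le_of_dvd (Nat.factorial_pos _)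
      (Nat.factorial_mul_factorial_dvd_factorial_add m n)
  rw [norm_div, norm_pow, norm_natCast, Real.norm_eq_abs, pow_add,
    show |x| ^ n / n ! * (|x| ^ m / m !) = |x| ^ m * |x| ^ n / (m ! * n !) by ring]
  gcongr

theorem Real.abs_two_mul_sinh_sub_le (x : ℝ) :
    |2 * sinh x - 2 * x - x ^ 3 / 3| ≤ x ^ 4 / 12 * exp |x| := by
  have hpos := abs_exp_sub_sum_range_le 4 x
  have hneg := abs_exp_sub_sum_range_le 4 (-x)
  simp only [sum_range_succ, sum_range_zero, abs_neg, (by decide : Even 4).pow_abs] at hpos hneg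
  norm_num [Nat.factorial] at hpos hneg
  rw [sinh_eq]
  calc |2 * ((exp x - exp (-x)) / 2) - 2 * x - x ^ 3 / 3|
      = |(exp x - (1 + x + x ^ 2 / 2 + x ^ 3 / 6))
          - (exp (-x) - (1 + -x + x ^ 2 / 2 + (-x) ^ 3 / 6))| := by
        ring_nf
    _ ≤ |exp x - (1 + x + x ^ 2 / 2 + x ^ 3 / 6)|
          + |exp (-x) - (1 + -x + x ^ 2 / 2 + (-x) ^ 3 / 6)| := abs_sub _ _
    _ ≤ x ^ 4 / 24 * exp |x| + x ^ 4 / 24 * exp |x| := add_le_add hpos hneg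
    _ = x ^ 4 / 12 * exp |x| := by ring

theorem hasSum_Li2 {x : ℝ} (hx : |x| ≤ 1) :
    HasSum (fun k : ℕ => x ^ (k + 1) / ((k + 1 : ℝ) ^ 2)) (Li2 x) := by
  have hdom : Summable (fun k : ℕ => 1 / ((k + 1 : ℝ) ^ 2)) := by
    exact_mod_cast (summable_nat_add_iff 1).2 (Real.summable_one_div_nat_pow.2 one_lt_two)
  refine (Summable.of_norm_bounded hdom fun k => ?_).hasSum
  rw [norm_div, norm_pow, Real.norm_eq_abs, norm_of_nonneg (by positivity)]
  gcongr
  exact pow_le_one₀ (abs_nonneg x) hx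

theorem hasSum_succ_mul_geometric {r : ℝ} (hr : |r| < 1) :
    HasSum (fun k : ℕ => ((k : ℝ) + 1) * r ^ (k + 1)) (r / (1 - r) ^ 2) := by
  have h := (hasSum_nat_add_iff' 1).2 (hasSum_coe_mul_geometric_of_norm_lt_one (r := r) hr)
  simpa using h

theorem summable_succ_sq_mul_geometric {r : ℝ} (hr : |r| < 1) :
    Summable fun k : ℕ => ((k : ℝ) + 1) ^ 2 * r ^ (k + 1) := by
  have h := (summable_nat_add_iff (f := fun n : ℕ => (n : ℝ) ^ 2 * r ^ n) 1).2
    (summable_pow_mul_geometric_of_norm_lt_one (R := ℝ) 2 hr)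
  exact_mod_cast h

noncomputable def actionSeriesTerm (b w : ℝ) (k : ℕ) : ℝ :=
  b ^ (k + 1) / ((k + 1 : ℝ) ^ 2) *
    (2 * sinh ((k + 1) * w) - 2 * ((k + 1) * w) - ((k + 1) * w) ^ 3 / 3)

theorem abs_actionSeriesTerm_le {b w ρ : ℝ} (h : |b| * exp |w| ≤ ρ) (k : ℕ) :
    |actionSeriesTerm b w k| ≤ (k + 1 : ℝ) ^ 2 * ρ ^ (k + 1) / 12 * w ^ 4 := by
  set K : ℝ := k + 1
  have hK : 0 < K := by positivity
  have hgeom : |b| ^ (k + 1) * exp |K * w| ≤ ρ ^ (k + 1) :=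
    calc |b| ^ (k + 1) * exp |K * w| = (|b| * exp |w|) ^ (k + 1) := by
          rw [abs_mul, abs_of_pos hK, mul_pow, ← exp_nat_mul]
          push_cast
          rfl
      _ ≤ ρ ^ (k + 1) := pow_le_pow_left₀ (by positivity) h _
  calc |actionSeriesTerm b w k|
      = |b| ^ (k + 1) / K ^ 2 * |2 * sinh (K * w) - 2 * (K * w) - (K * w) ^ 3 / 3| := by
        rw [actionSeriesTerm, abs_mul, abs_div, abs_pow, abs_of_pos (by positivity : 0 < K ^ 2)]
    _ ≤ |b| ^ (k + 1) / K ^ 2 * ((K * w) ^ 4 / 12 * exp |K * w|) := by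
        gcongr
        exact abs_two_mul_sinh_sub_le _
    _ = K ^ 2 / 12 * w ^ 4 * (|b| ^ (k + 1) * exp |K * w|) := by
        field_simp
    _ ≤ K ^ 2 / 12 * w ^ 4 * ρ ^ (k + 1) := by gcongr
    _ = K ^ 2 * ρ ^ (k + 1) / 12 * w ^ 4 := by ring

theorem hasSum_action_exp_sub {b w : ℝ} (hbw : |b| * exp |w| < 1) :
    HasSum (actionSeriesTerm b w)
      (action b (exp w) - action b 1 - b / (3 * (1 - b) ^ 2) * w ^ 3) := by
  have hb : |b| < 1 :=
    (le_mul_of_one_le_right (abs_nonneg b) (one_le_exp (abs_nonneg w))).trans_lt hbw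
  have hsmall : ∀ u, |u| ≤ |w| → |b * exp u| ≤ 1 := fun u hu => by
    rw [abs_mul, abs_exp]
    exact le_trans (by gcongr; exact (le_abs_self u).trans hu) hbw.le
  have h1 := hasSum_Li2 (hsmall w le_rfl)
  have h2 := hasSum_Li2 (hsmall (-w) (abs_neg w).le)
  have h3 := hasSum_pow_div_log_of_abs_lt_one hb
  have h4 := hasSum_succ_mul_geometric hb
  have hval : action b (exp w) - action b 1 - b / (3 * (1 - b) ^ 2) * w ^ 3 =
      Li2 (b * exp w) - Li2 (b * exp (-w)) + -2 * w * -log (1 - b)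
        - w ^ 3 / 3 * (b / (1 - b) ^ 2) := by
    have hb_ne : 1 - b ≠ 0 := by linarith [le_abs_self b]
    simp only [action, log_exp, log_one, exp_neg, div_eq_mul_inv, mul_one, inv_one]
    field_simp
    ring
  rw [hval]
  refine (((h1.sub h2).add (h3.mul_left (-2 * w))).sub (h4.mul_left (w ^ 3 / 3))).congr_fun
    fun k => ?_
  simp only [actionSeriesTerm, sinh_eq, mul_pow, ← exp_nat_mul]
  push_cast
  field_simp
  ring

/-- Taylor expansion of the action at its double critical point: for
`0 < b < 1`, `S(e^w) = S(1) + (b/(3(1-b)²)) w³ + O(w⁴)` as `w → 0`. -/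
theorem stmt17 (b : ℝ) (hb0 : 0 < b) (hb1 : b < 1) :
    (fun w : ℝ =>
        action b (Real.exp w) - action b 1 - (b / (3 * (1 - b) ^ 2)) * w ^ 3)
      =O[nhds 0] fun w => w ^ 4 := by
  have hb : |b| < 1 := abs_lt.2 ⟨by linarith, hb1⟩
  obtain ⟨ρ, hbρ, hρ1⟩ := exists_between hb
  have hnear : ∀ᶠ w in nhds 0, |b| * exp |w| < ρ := by
    have hcont : Continuous fun w : ℝ => |b| * exp |w| := by fun_prop
    have hlim := hcont.tendsto 0
    simp only [abs_zero, exp_zero, mul_one] at hlim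
    exact hlim.eventually_lt_const hbρ
  have hsum := summable_succ_sq_mul_geometric (abs_lt.2 ⟨by linarith [abs_nonneg b], hρ1⟩)
  refine isBigO_iff.2 ⟨(∑' k : ℕ, ((k : ℝ) + 1) ^ 2 * ρ ^ (k + 1)) / 12, ?_⟩
  filter_upwards [hnear] with w hw
  rw [norm_of_nonneg (by positivity : (0 : ℝ) ≤ w ^ 4)]
  exact (hasSum_action_exp_sub (hw.trans hρ1)).norm_le_of_bounded
    ((hsum.hasSum.div_const 12).mul_right (w ^ 4)) fun k => abs_actionSeriesTerm_le hw.le k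
end
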